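/- Let B_{b,t} be a blossom with tenacity t < l_m, and let v be a vertex such that base^k(v) = b for some k >= 1. If t >= tenacity(base^{k-1}(v)) (interpreting base^0(v) = v), then v belongs to B_{b,t}. -/

import Mathlib

open scoped Classical

universe u

variable {V : Type u}

/-- A finite-or-infinite undirected graph together with a matching. -/
structure MatchedGraph (V : Type u) where
  adj : V → V → Prop
  symm : ∀ u v, adj u v → adj v u
  loopless : ∀ v, ¬ adj v v
  M : V → V → Prop
  M_symm : ∀ u v, M u v → M v u
  M_sub : ∀ u v, M u v → adj u v
  M_matching : ∀ u v w, M u v → M u w → v = w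

namespace MatchedGraph

/-- A vertex is unmatched if no matched edge is incident to it. -/
def unmatched (g : MatchedGraph V) (v : V) : Prop := ∀ u, ¬ g.M v u

/-- `p` is a simple alternating path starting at `b` and ending at `v`,
whose first edge is unmatched and whose edges alternate unmatched/matched.
(The `i`-th edge is matched iff `i` is odd.) -/
def AltPath (g : MatchedGraph V) (p : List V) (b v : V) : Prop :=
  p.head? = some b ∧ p.getLast? = some v ∧ p.Nodup ∧
  ∀ i, i + 1 < p.length →
    g.adj (p.getD i b) (p.getD (i + 1) b) ∧
      (g.M (p.getD i b) (p.getD (i + 1) b) ↔ i % 2 = 1)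

/-- An alternating path from an *unmatched* vertex `f` to `v`. -/
def AltPathFrom (g : MatchedGraph V) (p : List V) (f v : V) : Prop :=
  g.unmatched f ∧ g.AltPath p f v

/-- Minimum length of an even alternating path from an unmatched vertex to `v`. -/
noncomputable def evenlevel (g : MatchedGraph V) (v : V) : ℕ∞ :=
  sInf {n : ℕ∞ | ∃ p f, g.AltPathFrom p f v ∧ Even (p.length - 1) ∧
    n = ((p.length - 1 : ℕ) : ℕ∞)}

/-- Minimum length of an odd alternating path from an unmatched vertex to `v`. -/
noncomputable def oddlevel (g : MatchedGraph V) (v : V) : ℕ∞ :=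
  sInf {n : ℕ∞ | ∃ p f, g.AltPathFrom p f v ∧ Odd (p.length - 1) ∧
    n = ((p.length - 1 : ℕ) : ℕ∞)}

noncomputable def tenacity (g : MatchedGraph V) (v : V) : ℕ∞ :=
  g.evenlevel v + g.oddlevel v

noncomputable def minlevel (g : MatchedGraph V) (v : V) : ℕ∞ :=
  min (g.evenlevel v) (g.oddlevel v)

noncomputable def maxlevel (g : MatchedGraph V) (v : V) : ℕ∞ :=
  max (g.evenlevel v) (g.oddlevel v)

/-- Minimum length of an augmenting path: an alternating path between two
distinct unmatched vertices. -/
noncomputable def lm (g : MatchedGraph V) : ℕ∞ :=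
  sInf {n : ℕ∞ | ∃ p f v, g.AltPathFrom p f v ∧ g.unmatched v ∧ f ≠ v ∧
    n = ((p.length - 1 : ℕ) : ℕ∞)}

/-- Minimum tenacity of any vertex. -/
noncomputable def tm (g : MatchedGraph V) : ℕ∞ := ⨅ v, g.tenacity v

/-- `p` is an `evenlevel(v)` path starting at the unmatched vertex `f`. -/
def IsEvenlevelPath (g : MatchedGraph V) (p : List V) (f v : V) : Prop :=
  g.AltPathFrom p f v ∧ Even (p.length - 1) ∧
    ((p.length - 1 : ℕ) : ℕ∞) = g.evenlevel v

/-- `p` is an `oddlevel(v)` path starting at the unmatched vertex `f`. -/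
def IsOddlevelPath (g : MatchedGraph V) (p : List V) (f v : V) : Prop :=
  g.AltPathFrom p f v ∧ Odd (p.length - 1) ∧
    ((p.length - 1 : ℕ) : ℕ∞) = g.oddlevel v

/-- `p` is a `minlevel(v)` path starting at the unmatched vertex `f`. -/
def IsMinlevelPath (g : MatchedGraph V) (p : List V) (f v : V) : Prop :=
  g.AltPathFrom p f v ∧ ((p.length - 1 : ℕ) : ℕ∞) = g.minlevel v

/-- `p` is a `maxlevel(v)` path starting at the unmatched vertex `f`. -/
def IsMaxlevelPath (g : MatchedGraph V) (p : List V) (f v : V) : Prop :=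
  g.AltPathFrom p f v ∧ ((p.length - 1 : ℕ) : ℕ∞) = g.maxlevel v

/-- The vertex at position `i` of `p` (whose prefix from `f` has length `i`)
is BFS-honest w.r.t. `p`. -/
def BFSHonest (g : MatchedGraph V) (p : List V) (f : V) (i : ℕ) : Prop :=
  (Even i → g.evenlevel (p.getD i f) = (i : ℕ∞)) ∧
  (Odd i → g.oddlevel (p.getD i f) = (i : ℕ∞))

/-- `u` is a predecessor of `v`: `(u, v)` is the last edge of some
`minlevel(v)` path. -/
def IsPred (g : MatchedGraph V) (u v : V) : Prop :=
  ∃ p f, g.IsMinlevelPath p f v ∧ 2 ≤ p.length ∧ p.getD (p.length - 2) f = u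

/-- A prop is an edge which is the last edge of a minlevel path to one of its
endpoints. -/
def IsPropEdge (g : MatchedGraph V) (u v : V) : Prop :=
  g.IsPred u v ∨ g.IsPred v u

/-- A bridge is an edge that is not a prop. -/
def IsBridge (g : MatchedGraph V) (u v : V) : Prop :=
  g.adj u v ∧ ¬ g.IsPropEdge u v

/-- Tenacity of an edge. -/
noncomputable def etenacity (g : MatchedGraph V) (u v : V) : ℕ∞ :=
  if g.M u v then g.oddlevel u + g.oddlevel v + 1
  else g.evenlevel u + g.evenlevel v + 1

/-- The set `B(v)` of all `F(p, v)`: for each `evenlevel(v)` or `oddlevel(v)`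
path `p`, the vertex on `p` farthest from the unmatched endpoint among the
vertices of tenacity greater than `tenacity(v)`. -/
def Bset (g : MatchedGraph V) (v : V) : Set V :=
  {b | ∃ p f i, (g.IsEvenlevelPath p f v ∨ g.IsOddlevelPath p f v) ∧
    i < p.length ∧ b = p.getD i f ∧ g.tenacity v < g.tenacity b ∧
    ∀ k, i < k → k < p.length → g.tenacity (p.getD k f) ≤ g.tenacity v}

/-- `b` is the (unique) base of `v`. -/
def baseOf (g : MatchedGraph V) (v b : V) : Prop := g.Bset v = {b}

/-- Iterated bases: `iterBase k v b` means `b = base^k(v)` (with `base^0(v) = v`). -/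
def iterBase (g : MatchedGraph V) : ℕ → V → V → Prop
  | 0, v, b => v = b
  | k + 1, v, b => ∃ u, g.iterBase k v u ∧ g.baseOf u b

/-- A vertex is outer if `evenlevel(v) < oddlevel(v)`. -/
def IsOuter (g : MatchedGraph V) (v : V) : Prop := g.evenlevel v < g.oddlevel v

/-- A vertex is inner if it is not outer. -/
def IsInner (g : MatchedGraph V) (v : V) : Prop := g.oddlevel v ≤ g.evenlevel v

/-- The set `S_{b,t}` of vertices of tenacity `t` with base `b`. -/
def Sset (g : MatchedGraph V) (t : ℕ) (b : V) : Set V :=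
  {v | g.tenacity v = (t : ℕ∞) ∧ g.baseOf v b}

/-- The blossom `B_{b,t}`, defined recursively. -/
def blossom (g : MatchedGraph V) : ℕ → V → Set V
  | 0, _ => ∅
  | 1, _ => ∅
  | t + 2, b => g.Sset (t + 2) b ∪
      ⋃ v ∈ {v | (v ∈ g.Sset (t + 2) b ∨ v = b) ∧ g.IsOuter v}, blossom g t v

/-- The nesting depth `N(B_{b,t})` of a blossom. -/
noncomputable def ndepth (g : MatchedGraph V) [Fintype V] : ℕ → V → ℕ
  | 0, _ => 0
  | 1, _ => 0
  | t + 2, b =>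
    if (g.Sset (t + 2) b).Nonempty then
      1 + Finset.univ.sup (fun v =>
        if (v ∈ g.Sset (t + 2) b ∨ v = b) ∧ g.IsOuter v then ndepth g t v else 0)
    else ndepth g t b

/-- `evenlevel(b; v)`: minimum even length of an alternating path from `b` to
`v` starting with an unmatched edge. -/
noncomputable def evenlevelFrom (g : MatchedGraph V) (b v : V) : ℕ∞ :=
  sInf {n : ℕ∞ | ∃ p, g.AltPath p b v ∧ Even (p.length - 1) ∧
    n = ((p.length - 1 : ℕ) : ℕ∞)}

/-- `oddlevel(b; v)`: minimum odd length of an alternating path from `b` to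
`v` starting with an unmatched edge. -/
noncomputable def oddlevelFrom (g : MatchedGraph V) (b v : V) : ℕ∞ :=
  sInf {n : ℕ∞ | ∃ p, g.AltPath p b v ∧ Odd (p.length - 1) ∧
    n = ((p.length - 1 : ℕ) : ℕ∞)}

end MatchedGraph

/-!
Induction on the odd number `t`, along the recursion `t ↦ t - 2` that defines blossoms. Let
`u = base^{k-1}(v)`. Tenacities are odd, so if `tenacity u < t` then `tenacity u ≤ t - 2` and
`v ∈ B_{b,t-2} ⊆ B_{b,t}`, as `b` is outer. If `tenacity u = t` then `u ∈ S_{b,t}`; either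
`v = u`, or `u` is the base of a vertex of smaller tenacity, and then `v ∈ B_{u,t-2} ⊆ B_{b,t}`
provided `u` is outer.

That every base `u` of a vertex `w` is outer is the heart of the matter. On both the evenlevel
and the oddlevel path of `w`, `u` sits at an even position: at an odd one the next vertex would
be its matched partner, of tenacity smaller than `tenacity u`, which is impossible below `l_m`.
Hence `evenlevel u` is smaller than both levels of `w`, so
`2 evenlevel u < tenacity w < tenacity u = evenlevel u + oddlevel u`.
-/

namespace MatchedGraph

variable {g : MatchedGraph V} {p : List V} {f u v w x : V}

namespace AltPath

lemma length_pos (h : g.AltPath p f v) : 0 < p.length :=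
  List.length_pos_iff.2 (by rintro rfl; simp [AltPath] at h)

lemma getD_zero (h : g.AltPath p f v) : p.getD 0 f = f := by
  cases p with
  | nil => simp [AltPath] at h
  | cons a l => simpa [AltPath] using h.1

lemma getD_last (h : g.AltPath p f v) : p.getD (p.length - 1) f = v := by
  rw [List.getD_eq_getElem?_getD, ← List.getLast?_eq_getElem?, h.2.1]
  rfl

lemma getD_injective (h : g.AltPath p f v) {i j : ℕ} (hi : i < p.length) (hj : j < p.length)
    (hij : p.getD i f = p.getD j f) : i = j := by
  rw [List.getD_eq_getElem _ _ hi, List.getD_eq_getElem _ _ hj] at hij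
  exact h.2.2.1.getElem_inj_iff.1 hij

lemma M_iff (h : g.AltPath p f v) {i : ℕ} (hi : i + 1 < p.length) :
    g.M (p.getD i f) (p.getD (i + 1) f) ↔ i % 2 = 1 :=
  (h.2.2.2 i hi).2

lemma take (h : g.AltPath p f v) {i : ℕ} (hi : i < p.length) :
    g.AltPath (p.take (i + 1)) f (p.getD i f) := by
  have hlen : (p.take (i + 1)).length = i + 1 := by simp; omega
  have hget : ∀ j ≤ i, (p.take (i + 1)).getD j f = p.getD j f := fun j hj => by
    simp only [List.getD_eq_getElem?_getD, List.getElem?_take_of_lt (by omega : j < i + 1)]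
  refine ⟨?_, ?_, h.2.2.1.sublist (List.take_sublist _ _), fun j hj => ?_⟩
  · rw [List.head?_take, if_neg (by omega), h.1]
  · rw [List.getLast?_eq_getElem?, hlen, Nat.add_sub_cancel, List.getElem?_take_of_lt (by omega),
      List.getElem?_eq_getElem hi, List.getD_eq_getElem _ _ hi]
  · rw [hlen] at hj
    rw [hget j (by omega), hget (j + 1) (by omega)]
    exact h.2.2.2 j (by omega)

end AltPath

lemma AltPathFrom.evenlevel_getD_le (h : g.AltPathFrom p f v) {i : ℕ} (hi : i < p.length)
    (he : Even i) : g.evenlevel (p.getD i f) ≤ i := by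
  have hlen : (p.take (i + 1)).length = i + 1 := by simp; omega
  exact sInf_le ⟨_, f, ⟨h.1, h.2.take hi⟩, by simpa [hlen] using he, by simp [hlen]⟩

lemma AltPathFrom.oddlevel_getD_le (h : g.AltPathFrom p f v) {i : ℕ} (hi : i < p.length)
    (ho : Odd i) : g.oddlevel (p.getD i f) ≤ i := by
  have hlen : (p.take (i + 1)).length = i + 1 := by simp; omega
  exact sInf_le ⟨_, f, ⟨h.1, h.2.take hi⟩, by simpa [hlen] using ho, by simp [hlen]⟩

lemma exists_isEvenlevelPath (h : g.evenlevel v ≠ ⊤) : ∃ p f, g.IsEvenlevelPath p f v := by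
  have hne : {n : ℕ∞ | ∃ p f, g.AltPathFrom p f v ∧ Even (p.length - 1) ∧
      n = ((p.length - 1 : ℕ) : ℕ∞)}.Nonempty :=
    Set.nonempty_iff_ne_empty.2 fun h0 => h (by rw [evenlevel, h0, sInf_empty])
  obtain ⟨p, f, hp, he, hl⟩ := csInf_mem hne
  exact ⟨p, f, hp, he, hl.symm⟩

lemma exists_isOddlevelPath (h : g.oddlevel v ≠ ⊤) : ∃ p f, g.IsOddlevelPath p f v := by
  have hne : {n : ℕ∞ | ∃ p f, g.AltPathFrom p f v ∧ Odd (p.length - 1) ∧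
      n = ((p.length - 1 : ℕ) : ℕ∞)}.Nonempty :=
    Set.nonempty_iff_ne_empty.2 fun h0 => h (by rw [oddlevel, h0, sInf_empty])
  obtain ⟨p, f, hp, ho, hl⟩ := csInf_mem hne
  exact ⟨p, f, hp, ho, hl.symm⟩

lemma one_le_oddlevel : 1 ≤ g.oddlevel v :=
  le_sInf fun _ ⟨_, _, _, ho, hn⟩ => hn ▸ by exact_mod_cast ho.pos

lemma lm_le_oddlevel (hz : g.unmatched x) : g.lm ≤ g.oddlevel x := by
  refine le_sInf fun _ ⟨p, f, hp, ho, hn⟩ => sInf_le ⟨p, f, x, hp, hz, fun hfx => ?_, hn⟩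
  have h0 : 0 = p.length - 1 :=
    hp.2.getD_injective hp.2.length_pos (Nat.sub_lt hp.2.length_pos one_pos)
      (by rw [hp.2.getD_zero, hp.2.getD_last, hfx])
  exact (Nat.not_odd_zero (h0 ▸ ho)).elim

lemma lm_le_tenacity (hz : g.unmatched x) : g.lm ≤ g.tenacity x :=
  (lm_le_oddlevel hz).trans le_add_self

lemma unmatched_of_evenlevel_eq_zero (h : g.evenlevel v = 0) : g.unmatched v := by
  obtain ⟨p, f, hp, -, hl⟩ := exists_isEvenlevelPath (h ▸ ENat.zero_ne_top)
  have h0 : p.length - 1 = 0 := by exact_mod_cast hl.trans h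
  rw [← hp.2.getD_last, h0, hp.2.getD_zero]
  exact hp.1

lemma one_lt_tenacity (h : g.tenacity v < g.lm) : 1 < g.tenacity v := by
  have he : g.evenlevel v ≠ 0 := fun h0 =>
    (lm_le_tenacity (unmatched_of_evenlevel_eq_zero h0)).not_gt h
  calc (1 : ℕ∞) < 1 + 1 := by norm_num
    _ ≤ g.evenlevel v + g.oddlevel v :=
      add_le_add (Order.one_le_iff_ne_zero.2 he) one_le_oddlevel

lemma tenacity_ne_top_iff :
    g.tenacity v ≠ ⊤ ↔ g.evenlevel v ≠ ⊤ ∧ g.oddlevel v ≠ ⊤ :=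
  WithTop.add_ne_top

lemma odd_of_tenacity_eq {n : ℕ} (h : g.tenacity v = n) : Odd n := by
  have hfin := tenacity_ne_top_iff.1 (h ▸ ENat.natCast_ne_top n)
  obtain ⟨p, f, -, he, hp⟩ := exists_isEvenlevelPath hfin.1
  obtain ⟨q, f', -, ho, hq⟩ := exists_isOddlevelPath hfin.2
  rw [tenacity, ← hp, ← hq] at h
  exact (show p.length - 1 + (q.length - 1) = n by exact_mod_cast h) ▸ he.add_odd ho

lemma tenacity_le_of_lt_add_two {t : ℕ} (ht : Odd t) (h : g.tenacity v < (t + 2 : ℕ)) :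
    g.tenacity v ≤ t := by
  obtain ⟨n, hn⟩ := ENat.ne_top_iff_exists.1 (h.ne_top)
  rw [← hn] at h ⊢
  have hlt : n < t + 2 := by exact_mod_cast h
  obtain ⟨a, rfl⟩ := odd_of_tenacity_eq hn.symm
  obtain ⟨c, rfl⟩ := ht
  exact_mod_cast (by omega : 2 * a + 1 ≤ 2 * c + 1)

lemma tenacity_lt_of_baseOf (h : g.baseOf w u) : g.tenacity w < g.tenacity u := by
  obtain ⟨-, -, -, -, -, -, hlt, -⟩ := (h ▸ rfl : u ∈ g.Bset w)
  exact hlt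

lemma IsEvenlevelPath.getD_length_sub_two (hp : g.IsEvenlevelPath p f x) (hM : g.M x u) :
    3 ≤ p.length ∧ p.getD (p.length - 2) f = u := by
  obtain ⟨⟨hf, hpath⟩, he, -⟩ := hp
  have h3 : 3 ≤ p.length := by
    have h0 : p.length - 1 ≠ 0 := fun h0 =>
      hf u (by rwa [← hpath.getD_zero, ← h0, hpath.getD_last])
    have := hpath.length_pos
    obtain ⟨j, hj⟩ := he
    omega
  have hM' := (hpath.M_iff (i := p.length - 2) (by omega)).2
    (by obtain ⟨j, hj⟩ := he; omega)
  rw [show p.length - 2 + 1 = p.length - 1 by omega, hpath.getD_last] at hM'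
  exact ⟨h3, g.M_matching x _ _ (g.M_symm _ _ hM') hM⟩

lemma oddlevel_lt_evenlevel_of_M (hM : g.M x u) (hx : g.evenlevel x ≠ ⊤) :
    g.oddlevel u < g.evenlevel x := by
  obtain ⟨p, f, hp⟩ := exists_isEvenlevelPath hx
  obtain ⟨h3, hu⟩ := hp.getD_length_sub_two hM
  have hodd : Odd (p.length - 2) := by obtain ⟨j, hj⟩ := hp.2.1; exact ⟨j - 1, by omega⟩
  calc g.oddlevel u ≤ (p.length - 2 : ℕ) := hu ▸ hp.1.oddlevel_getD_le (by omega) hodd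
    _ < (p.length - 1 : ℕ) := by exact_mod_cast (by omega : p.length - 2 < p.length - 1)
    _ = g.evenlevel x := hp.2.2

/-- `i` is the position of the paper's `F(p, w)`. -/
lemma baseOf.exists_index (hwu : g.baseOf w u)
    (hp : g.IsEvenlevelPath p f w ∨ g.IsOddlevelPath p f w) (hlm : g.tenacity w < g.lm) :
    ∃ i, i + 1 < p.length ∧ p.getD i f = u ∧
      ∀ k, i < k → k < p.length → g.tenacity (p.getD k f) ≤ g.tenacity w := by
  have hpf : g.AltPathFrom p f w := hp.elim (·.1) (·.1)
  have hlen := hpf.2.length_pos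
  let P : ℕ → Prop := fun j => g.tenacity w < g.tenacity (p.getD j f)
  have hP0 : P 0 := by
    simp only [P, hpf.2.getD_zero]
    exact hlm.trans_le (lm_le_tenacity hpf.1)
  set i := Nat.findGreatest P (p.length - 1)
  have hPi : P i := Nat.findGreatest_spec (Nat.zero_le _) hP0
  have hafter : ∀ k, i < k → k < p.length → g.tenacity (p.getD k f) ≤ g.tenacity w :=
    fun k hik hk => not_lt.1 (Nat.findGreatest_is_greatest hik (by omega))
  have hi : i + 1 < p.length := by
    have hle : i ≤ p.length - 1 := Nat.findGreatest_le _
    refine lt_of_le_of_ne (by omega) fun hi => ?_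
    have hw : p.getD i f = w := by rw [show i = p.length - 1 by omega, hpf.2.getD_last]
    exact lt_irrefl (g.tenacity w) (by simpa only [P, hw] using hPi)
  have hmem : p.getD i f ∈ g.Bset w := ⟨p, f, i, hp, by omega, rfl, hPi, hafter⟩
  rw [show g.Bset w = {u} from hwu] at hmem
  exact ⟨i, hi, hmem, hafter⟩

/-- If `u` had larger tenacity, it would be the base of `x` (it precedes `x` on its evenlevel
path). On the oddlevel path of `x`, `u` then sits either at an even position, which gives
`oddlevel x < evenlevel u ≤ oddlevel x`, or at an odd one, which forces `x` to follow it and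
the path to have even length. -/
lemma tenacity_le_of_M (hM : g.M x u) (hbase : ∃ b, g.baseOf x b) (hlm : g.tenacity x < g.lm) :
    g.tenacity u ≤ g.tenacity x := by
  by_contra! hlt
  have hfin := tenacity_ne_top_iff.1 hlm.ne_top
  have hxu : g.baseOf x u := by
    obtain ⟨p, f, hp⟩ := exists_isEvenlevelPath hfin.1
    obtain ⟨h3, hpu⟩ := hp.getD_length_sub_two hM
    have hmem : u ∈ g.Bset x := by
      refine ⟨p, f, p.length - 2, .inl hp, by omega, hpu.symm, hlt, fun k hk hk' => ?_⟩
      rw [show k = p.length - 1 by omega, hp.1.2.getD_last]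
    obtain ⟨b, hb⟩ := hbase
    rw [show g.Bset x = {b} from hb] at hmem
    rwa [Set.eq_of_mem_singleton hmem]
  obtain ⟨q, f, hq⟩ := exists_isOddlevelPath hfin.2
  obtain ⟨i, hi, hqu, -⟩ := hxu.exists_index (.inr hq) hlm
  rcases Nat.even_or_odd i with he | ho
  · have hev : g.evenlevel u ≤ i := hqu ▸ hq.1.evenlevel_getD_le (by omega) he
    have hlt' := (oddlevel_lt_evenlevel_of_M (g.M_symm _ _ hM)
      (ne_top_of_le_ne_top (ENat.natCast_ne_top i) hev)).trans_le hev
    rw [← hq.2.2] at hlt'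
    have : q.length - 1 < i := by exact_mod_cast hlt'
    omega
  · have hMq := (hq.1.2.M_iff hi).2 (Nat.odd_iff.1 ho)
    rw [hqu] at hMq
    have hx : q.getD (i + 1) f = q.getD (q.length - 1) f := by
      rw [hq.1.2.getD_last]
      exact g.M_matching u _ _ hMq (g.M_symm _ _ hM)
    have := hq.1.2.getD_injective hi (by omega) hx
    obtain ⟨j, hj⟩ := ho
    obtain ⟨l, hl⟩ := hq.2.1
    omega

lemma baseOf.evenlevel_lt (hwu : g.baseOf w u)
    (hp : g.IsEvenlevelPath p f w ∨ g.IsOddlevelPath p f w) (hlm : g.tenacity w < g.lm)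
    (hbases : ∀ y, g.tenacity y ≤ g.tenacity w → ∃ b, g.baseOf y b) :
    g.evenlevel u < (p.length - 1 : ℕ) := by
  have hpf : g.AltPathFrom p f w := hp.elim (·.1) (·.1)
  obtain ⟨i, hi, hpu, hafter⟩ := hwu.exists_index hp hlm
  have he : Even i := by
    refine Nat.not_odd_iff_even.1 fun ho => ?_
    have hM := (hpf.2.M_iff hi).2 (Nat.odd_iff.1 ho)
    rw [hpu] at hM
    have hy := hafter (i + 1) (by omega) hi
    have := tenacity_le_of_M (g.M_symm _ _ hM) (hbases _ hy) (hy.trans_lt hlm)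
    exact (tenacity_lt_of_baseOf hwu).not_ge (this.trans hy)
  calc g.evenlevel u ≤ i := hpu ▸ hpf.evenlevel_getD_le (by omega) he
    _ < (p.length - 1 : ℕ) := by exact_mod_cast (by omega : i < p.length - 1)

lemma isOuter_of_baseOf (hwu : g.baseOf w u) (hlm : g.tenacity w < g.lm)
    (hbases : ∀ y, g.tenacity y ≤ g.tenacity w → ∃ b, g.baseOf y b) : g.IsOuter u := by
  obtain ⟨hev, hodd⟩ := tenacity_ne_top_iff.1 hlm.ne_top
  obtain ⟨p, f, hp⟩ := exists_isEvenlevelPath hev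
  obtain ⟨q, f', hq⟩ := exists_isOddlevelPath hodd
  have hltev := hp.2.2 ▸ hwu.evenlevel_lt (.inl hp) hlm hbases
  have hltodd := hq.2.2 ▸ hwu.evenlevel_lt (.inr hq) hlm hbases
  by_contra! hle
  rw [IsOuter, not_lt] at hle
  exact (tenacity_lt_of_baseOf hwu).not_ge <| calc
    g.tenacity u ≤ g.evenlevel u + g.evenlevel u := add_le_add le_rfl hle
    _ ≤ g.tenacity w := add_le_add hltev.le hltodd.le

lemma Sset_subset_blossom (t : ℕ) (b : V) : g.Sset (t + 2) b ⊆ g.blossom (t + 2) b :=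
  Set.subset_union_left

lemma blossom_subset_blossom_add_two {t : ℕ} {b x : V} (hx : x ∈ g.Sset (t + 2) b ∨ x = b)
    (hout : g.IsOuter x) : g.blossom t x ⊆ g.blossom (t + 2) b :=
  (Set.subset_biUnion_of_mem (u := g.blossom t) (⟨hx, hout⟩ : _ ∧ _)).trans
    Set.subset_union_right

lemma mem_blossom_of_baseOf {t : ℕ} (ht : Odd t) (htlm : (t : ℕ∞) < g.lm)
    (hbases : ∀ y, g.tenacity y ≤ t → ∃ b, g.baseOf y b) {b : V} (hb : g.IsOuter b)
    (hub : g.baseOf u b) (hut : g.tenacity u ≤ t) {k : ℕ} (hvu : g.iterBase k v u) :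
    v ∈ g.blossom t b := by
  induction t using Nat.twoStepInduction generalizing b u k v with
  | zero => exact absurd ht Nat.not_odd_zero
  | one => exact absurd hut (one_lt_tenacity (hut.trans_lt htlm)).not_ge
  | more t ih _ =>
    have ht' : Odd t := by simpa [Nat.odd_add] using ht
    have hle : (t : ℕ∞) ≤ (t + 2 : ℕ) := by exact_mod_cast (by omega : t ≤ t + 2)
    have htlm' := hle.trans_lt htlm
    have hbases' : ∀ y, g.tenacity y ≤ t → ∃ b, g.baseOf y b :=
      fun y hy => hbases y (hy.trans hle)
    rcases hut.lt_or_eq with hlt | heq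
    · exact blossom_subset_blossom_add_two (.inr rfl) hb
        (ih ht' htlm' hbases' hb hub (tenacity_le_of_lt_add_two ht' hlt) hvu)
    · have hS : u ∈ g.Sset (t + 2) b := ⟨heq, hub⟩
      cases k with
      | zero => exact Sset_subset_blossom t b ((hvu : v = u) ▸ hS)
      | succ j =>
        obtain ⟨w, hvw, hwu⟩ := hvu
        have hwt : g.tenacity w < (t + 2 : ℕ) := heq ▸ tenacity_lt_of_baseOf hwu
        have hu : g.IsOuter u :=
          isOuter_of_baseOf hwu (hwt.trans htlm) fun y hy => hbases y (hy.trans hwt.le)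
        exact blossom_subset_blossom_add_two (.inl hS) hu
          (ih ht' htlm' hbases' hu hwu (tenacity_le_of_lt_add_two ht' hwt) hvw)

end MatchedGraph

theorem mem_blossom_of_iterBase_general (g : MatchedGraph V) (b v u : V) (t : ℕ)
    (hodd : Odd t) (htlm : (t : ℕ∞) < g.lm)
    (houter : g.IsOuter b)
    (hclaim : ∀ w, g.tenacity w ≤ (t : ℕ∞) → ∃ b', g.baseOf w b')
    (k : ℕ)
    (hu : g.iterBase (k - 1) v u) (hub : g.baseOf u b)
    (htu : g.tenacity u ≤ (t : ℕ∞)) :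
    v ∈ g.blossom t b :=
  g.mem_blossom_of_baseOf hodd htlm hclaim houter hub htu hu

/-- Let `B_{b,t}` be a blossom with `t < l_m`, and let `v` satisfy
`base^k(v) = b` for some `k ≥ 1`. If `t ≥ tenacity(base^{k-1}(v))` (with
`base^0(v) = v`), then `v ∈ B_{b,t}`. -/
theorem mem_blossom_of_iterBase (g : MatchedGraph V) (b v u : V) (t : ℕ)
    (hodd : Odd t) (htlm : (t : ℕ∞) < g.lm)
    (houter : g.IsOuter b) (htb : (t : ℕ∞) < g.tenacity b)
    (hclaim : ∀ w, g.tenacity w ≤ (t : ℕ∞) → ∃ b', g.baseOf w b')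
    (k : ℕ) (hk : 1 ≤ k)
    (hu : g.iterBase (k - 1) v u) (hub : g.baseOf u b)
    (htu : g.tenacity u ≤ (t : ℕ∞)) :
    v ∈ g.blossom t b :=
  mem_blossom_of_iterBase_general g b v u t hodd htlm houter hclaim k hu hub htu
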